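/- arXiv:2411.12892 — 5 statements merged into one kernel-verified Lean document; each statement's English description precedes it below -/
import Mathlib

section
/- Let s ∈ ℝ^L be the softmax of a vector of attention scores z ∈ ℝ^L, i.e. s_i = exp(z_i)/∑_j exp(z_j), where z_i = xᵢᵀ W q with all tokens x_i and the query q having unit Euclidean norm, and W a d×d matrix with operator norm ‖W‖. Then the maximum entry of s satisfies max_i s_i ≤ 1 / (1 + (L−1) e^{−2‖W‖}). -/
open RealInnerProductSpace

noncomputable def softmax {L : ℕ} (z : Fin L → ℝ) (i : Fin L) : ℝ :=
  Real.exp (z i) / ∑ j, Real.exp (z j)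

theorem stmt2 {d L : ℕ}
    (W : EuclideanSpace ℝ (Fin d) →L[ℝ] EuclideanSpace ℝ (Fin d))
    (x : Fin L → EuclideanSpace ℝ (Fin d)) (q : EuclideanSpace ℝ (Fin d))
    (hx : ∀ i, ‖x i‖ = 1) (hq : ‖q‖ = 1) (hL : 1 ≤ L) :
    ∀ i, softmax (fun j => ⟪x j, W q⟫) i
      ≤ 1 / (1 + ((L : ℝ) - 1) * Real.exp (-2 * ‖W‖)) := by
  intro i
  set z : Fin L → ℝ := fun j => ⟪x j, W q⟫ with hzdef
  have hz : ∀ j, |z j| ≤ ‖W‖ := by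
    intro j
    calc |z j| ≤ ‖x j‖ * ‖W q‖ := abs_real_inner_le_norm _ _
    _ ≤ 1 * (‖W‖ * ‖q‖) := by
        rw [hx j]
        exact mul_le_mul_of_nonneg_left (W.le_opNorm q) zero_le_one
    _ = ‖W‖ := by rw [hq]; ring
  have hW : (0:ℝ) ≤ ‖W‖ := norm_nonneg _
  have hLpos : (0:ℝ) ≤ (L:ℝ) - 1 := by
    have : (1:ℝ) ≤ (L:ℝ) := by exact_mod_cast hL
    linarith
  have hDpos : (0:ℝ) < 1 + ((L : ℝ) - 1) * Real.exp (-2 * ‖W‖) := by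
    positivity
  have hsum : Real.exp (z i) + ((L:ℝ) - 1) * Real.exp (-‖W‖)
      ≤ ∑ j, Real.exp (z j) := by
    rw [← Finset.add_sum_erase _ _ (Finset.mem_univ i)]
    gcongr with _j hj
    · calc ((L:ℝ) - 1) * Real.exp (-‖W‖)
          = ∑ _j ∈ Finset.univ.erase i, Real.exp (-‖W‖) := by
            rw [Finset.sum_const, Finset.card_erase_of_mem (Finset.mem_univ i),
              Finset.card_univ, Fintype.card_fin, nsmul_eq_mul, Nat.cast_sub hL, Nat.cast_one]
        _ ≤ ∑ j ∈ Finset.univ.erase i, Real.exp (z j) := by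
            gcongr with j hj
            have := hz j
            have := neg_abs_le (z j)
            linarith
  have hSpos : (0:ℝ) < ∑ j, Real.exp (z j) := by
    have : Real.exp (z i) + ((L:ℝ) - 1) * Real.exp (-‖W‖) > 0 := by positivity
    linarith
  rw [softmax, div_le_div_iff₀ hSpos hDpos, one_mul]
  have h1 : Real.exp (z i) * (1 + ((L : ℝ) - 1) * Real.exp (-2 * ‖W‖))
      = Real.exp (z i) + ((L:ℝ)-1) * (Real.exp (z i) * Real.exp (-2*‖W‖)) := by ring
  rw [h1]
  have h2 : Real.exp (z i) * Real.exp (-2*‖W‖) ≤ Real.exp (-‖W‖) := by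
    rw [← Real.exp_add]
    apply Real.exp_le_exp.2
    have := hz i
    have := le_abs_self (z i)
    linarith
  calc Real.exp (z i) + ((L:ℝ)-1) * (Real.exp (z i) * Real.exp (-2*‖W‖))
      ≤ Real.exp (z i) + ((L:ℝ)-1) * Real.exp (-‖W‖) := by
        gcongr
    _ ≤ ∑ j, Real.exp (z j) := hsum
end

section
/- Let s ∈ ℝ^L with s_i = exp(z_i)/∑_j exp(z_j) (softmax), where z ∈ ℝ^L satisfies |z_i| ≤ B for all i. If max_i s_i ≥ c for a constant c ∈ (0,1) and L ≥ 2, then B ≥ (1/2) log((c(L−1))/(1−c)). -/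
open Real Finset

/-! Since `(softmax z i)⁻¹ = ∑ⱼ exp (zⱼ - zᵢ)` and every difference `zⱼ - zᵢ` is at least `-2B`,
each softmax probability is at most `1 / (1 + (L - 1) e^{-2B})`; solving `c ≤` this bound for `B`
gives the claim. -/

lemma inv_softmax_eq_sum_exp_sub {L : ℕ} (z : Fin L → ℝ) (i : Fin L) :
    (softmax z i)⁻¹ = ∑ j, exp (z j - z i) := by
  simp only [softmax, inv_div, exp_sub, sum_div]

lemma one_add_mul_exp_le_inv_softmax {L : ℕ} {z : Fin L → ℝ} {B : ℝ} (hz : ∀ j, |z j| ≤ B)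
    (i : Fin L) : 1 + ((L : ℝ) - 1) * exp (-(2 * B)) ≤ (softmax z i)⁻¹ := by
  rw [inv_softmax_eq_sum_exp_sub, ← add_sum_erase _ _ (mem_univ i), sub_self, exp_zero]
  have hcard : ((univ.erase i).card : ℝ) = L - 1 := by
    rw [card_erase_of_mem (mem_univ i), card_univ, Fintype.card_fin,
      Nat.cast_sub (Nat.one_le_iff_ne_zero.2 (Fin.pos i).ne'), Nat.cast_one]
  gcongr
  rw [← hcard, ← nsmul_eq_mul]
  refine card_nsmul_le_sum _ _ _ fun j _ => ?_
  gcongr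
  linarith [neg_abs_le (z j), le_abs_self (z i), hz i, hz j]

theorem stmt3 {L : ℕ} (hL : 2 ≤ L) (z : Fin L → ℝ) (B c : ℝ)
    (hz : ∀ i, |z i| ≤ B) (hc : c ∈ Set.Ioo (0 : ℝ) 1)
    (hmax : ∃ i, c ≤ softmax z i) :
    (1 / 2) * Real.log (c * ((L : ℝ) - 1) / (1 - c)) ≤ B := by
  obtain ⟨hc0, hc1⟩ := hc
  obtain ⟨i, hi⟩ := hmax
  have hL1 : (0 : ℝ) < L - 1 := by
    have : (2 : ℝ) ≤ L := by exact_mod_cast hL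
    linarith
  have hinv : 1 + ((L : ℝ) - 1) * exp (-(2 * B)) ≤ c⁻¹ :=
    (one_add_mul_exp_le_inv_softmax hz i).trans (inv_anti₀ hc0 hi)
  have hexp : c * ((L : ℝ) - 1) / (1 - c) ≤ exp (2 * B) := by
    rw [exp_neg, le_inv_comm₀ (by positivity) hc0] at hinv
    rw [div_le_iff₀ (sub_pos.2 hc1)]
    field_simp at hinv
    linarith
  calc (1 / 2) * log (c * ((L : ℝ) - 1) / (1 - c))
      ≤ (1 / 2) * log (exp (2 * B)) := by gcongr
    _ = B := by rw [log_exp]; ring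
end

section
/- Let a, b ∈ ℝ^d be unit-norm, linearly independent vectors, and let y = α a + (1−α) b for some α ∈ (0,1). Fix a sequence x_1,…,x_L with each x_i ∈ {a,b}, and for n ∈ [L] let n_a = #{i ≤ n : x_i = a} ≥ 1, n − n_a ≥ 1, and κ_n = (n − n_a)/n_a. Suppose there is a matrix W⋆ ∈ ℝ^{d×d} with bᵀW⋆ = 0 and aᵀW⋆a = aᵀW⋆b = 1 (such W⋆ exists by linear independence). Then setting the inverse-temperature τ_n = log κ_n + log(α/(1−α)), the causal attention output at every position n equals y exactly; that is, Xᵀ softmax_n(τ_n · X W⋆ᵀ x_n) = y, where softmax_n denotes softmax over the first n positions and X = [x_1 … x_n]ᵀ. -/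
open RealInnerProductSpace
open scoped Classical

/-- Softmax restricted to a finite set of positions. -/
noncomputable def softmaxOn (s : Finset ℕ) (z : ℕ → ℝ) (i : ℕ) : ℝ :=
  Real.exp (z i) / ∑ j ∈ s, Real.exp (z j)

theorem stmt4 {d : ℕ} (a b : EuclideanSpace ℝ (Fin d))
    (ha : ‖a‖ = 1) (hb : ‖b‖ = 1)
    (hind : LinearIndependent ℝ ![a, b])
    (α : ℝ) (hα : α ∈ Set.Ioo (0 : ℝ) 1)
    (y : EuclideanSpace ℝ (Fin d)) (hy : y = α • a + (1 - α) • b)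
    (x : ℕ → EuclideanSpace ℝ (Fin d)) (hx : ∀ i, x i = a ∨ x i = b)
    (W : EuclideanSpace ℝ (Fin d) →L[ℝ] EuclideanSpace ℝ (Fin d))
    (hWb : ∀ v, ⟪b, W v⟫ = 0) (hWaa : ⟪a, W a⟫ = 1) (hWab : ⟪a, W b⟫ = 1)
    (n : ℕ) (hn : 1 ≤ n)
    (na : ℕ) (hna : na = ((Finset.range n).filter (fun i => x i = a)).card)
    (hna1 : 1 ≤ na) (hnan : na < n)
    (κ τ : ℝ) (hκ : κ = ((n : ℝ) - (na : ℝ)) / (na : ℝ))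
    (hτ : τ = Real.log κ + Real.log (α / (1 - α))) :
    ∑ i ∈ Finset.range n,
        softmaxOn (Finset.range n) (fun i => τ * ⟪x i, W (x (n - 1))⟫) i • x i = y := by
  obtain ⟨hα0, hα1⟩ := hα
  have h1α : 0 < 1 - α := by linarith
  have hnaR : (0:ℝ) < na := by exact_mod_cast hna1
  have hdiff : (0:ℝ) < (n:ℝ) - na := by
    have : (na:ℝ) < n := by exact_mod_cast hnan
    linarith
  have hκpos : 0 < κ := by rw [hκ]; positivity
  have hE : Real.exp τ = κ * (α / (1 - α)) := by
    rw [hτ, Real.exp_add, Real.exp_log hκpos, Real.exp_log (by positivity)]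
  have hab : a ≠ b := by
    intro h
    have h01 : (![a, b] : Fin 2 → _) 0 = ![a, b] 1 := by simpa using h
    have := hind.injective h01
    simp at this
  have hq : ⟪a, W (x (n-1))⟫ = 1 := by
    rcases hx (n-1) with h | h <;> rw [h] <;> assumption
  have hscore : ∀ i, ⟪x i, W (x (n-1))⟫ = if x i = a then 1 else 0 := by
    intro i
    rcases hx i with h | h
    · simp [h, hq]
    · have hba : b ≠ a := fun h' => hab h'.symm
      simp [h, hba, hWb]
  have hexp : ∀ i, Real.exp (τ * ⟪x i, W (x (n-1))⟫) =
      if x i = a then Real.exp τ else 1 := by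
    intro i; rw [hscore i]; split <;> simp
  have hcard2 : ((Finset.range n).filter (fun i => ¬ x i = a)).card = n - na := by
    have := Finset.card_filter_add_card_filter_not
      (s := Finset.range n) (p := fun i => x i = a)
    simp only [Finset.card_range] at this
    omega
  have hcard2R : (((Finset.range n).filter (fun i => ¬ x i = a)).card : ℝ)
      = (n:ℝ) - na := by
    rw [hcard2]; rw [Nat.cast_sub hnan.le]
  set E := Real.exp τ with hEdef
  have hD : ∑ j ∈ Finset.range n, Real.exp (τ * ⟪x j, W (x (n-1))⟫)
      = na * E + ((n:ℝ) - na) := by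
    simp_rw [hexp]
    rw [Finset.sum_ite, Finset.sum_const, Finset.sum_const, ← hna, hcard2]
    rw [nsmul_eq_mul, nsmul_eq_mul, Nat.cast_sub hnan.le]
    ring
  set D : ℝ := na * E + ((n:ℝ) - na) with hDdef
  have hEpos : 0 < E := Real.exp_pos τ
  have hDpos : 0 < D := by positivity
  have hterm : ∀ i ∈ Finset.range n,
      softmaxOn (Finset.range n) (fun i => τ * ⟪x i, W (x (n - 1))⟫) i • x i
      = if x i = a then (E / D) • a else (1 / D) • b := by
    intro i _
    unfold softmaxOn
    rw [hD, hexp i]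
    rcases hx i with h | h
    · simp [h]
    · have hba : b ≠ a := fun h' => hab h'.symm
      simp [h, hba, one_div]
  rw [Finset.sum_congr rfl hterm, Finset.sum_ite, Finset.sum_const, Finset.sum_const,
    ← hna]
  have hne1 : (n:ℝ) - na ≠ 0 := hdiff.ne'
  have hne2 : (1:ℝ) - α ≠ 0 := h1α.ne'
  have hEval : (na : ℝ) * E = ((n:ℝ) - na) * (α / (1 - α)) := by
    rw [hE, hκ]; field_simp
  have hDval : D = ((n:ℝ) - na) / (1 - α) := by
    rw [hDdef, hEval]; field_simp; ring
  have hcoefa : (na : ℝ) * (E / D) = α := by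
    rw [← mul_div_assoc, hEval, hDval]
    field_simp
  have hcoefb : (((Finset.range n).filter (fun i => ¬ x i = a)).card : ℝ) * (1 / D)
      = 1 - α := by
    rw [hcard2R, hDval]; field_simp
  rw [← Nat.cast_smul_eq_nsmul ℝ, ← Nat.cast_smul_eq_nsmul ℝ, smul_smul, smul_smul,
    hcoefa, hcoefb, hy]
end

section
/- Let e₁, e₂ ∈ ℝ^d be unit vectors with correlation ρ = e₁ᵀe₂, |ρ| < 1, and let E = [e₁; e₂]ᵀ ∈ ℝ^{2×d}. Let γ ∈ (0,1), Γ = |log((1−γ)/γ)|, P⋆ = [[1−γ, γ],[0,1]], and fix 0 < ε ≤ (1/2) min(γ, 1−γ). If W ∈ ℝ^{d×d} satisfies ‖P⋆ − softmax(E W Eᵀ)‖_∞ ≤ ε (entrywise, with row-wise softmax applied to the 2×2 matrix E W Eᵀ), then the entry constraint on row 2 forces e₂ᵀW(e₂ − e₁) ≥ log(1/ε − 1), and consequently ‖W‖ ≥ log(1/ε − 1) / ‖e₁ − e₂‖. -/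
open RealInnerProductSpace

theorem stmt11 {d : ℕ} (e₁ e₂ : EuclideanSpace ℝ (Fin d))
    (he₁ : ‖e₁‖ = 1) (he₂ : ‖e₂‖ = 1)
    (ρ : ℝ) (hρ : ρ = ⟪e₁, e₂⟫) (hρ1 : |ρ| < 1)
    (γ : ℝ) (hγ : γ ∈ Set.Ioo (0 : ℝ) 1)
    (ε : ℝ) (hε : 0 < ε) (hε2 : ε ≤ (1 / 2) * min γ (1 - γ))
    (W : EuclideanSpace ℝ (Fin d) →L[ℝ] EuclideanSpace ℝ (Fin d))
    (happrox : ∀ i j : Fin 2,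
      |(!![1 - γ, γ; 0, 1] : Matrix (Fin 2) (Fin 2) ℝ) i j
          - Real.exp (⟪![e₁, e₂] i, W (![e₁, e₂] j)⟫)
              / (Real.exp (⟪![e₁, e₂] i, W e₁⟫) + Real.exp (⟪![e₁, e₂] i, W e₂⟫))|
        ≤ ε) :
    ⟪e₂, W (e₂ - e₁)⟫ ≥ Real.log (1 / ε - 1)
      ∧ ‖W‖ ≥ Real.log (1 / ε - 1) / ‖e₁ - e₂‖ := by
  have hε1 : ε < 1 / 2 := by
    have hmin : min γ (1 - γ) < 1 := lt_of_le_of_lt (min_le_left _ _) hγ.2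
    nlinarith
  set a := ⟪e₂, W e₁⟫ with ha
  set b := ⟪e₂, W e₂⟫ with hb
  have hS : 0 < Real.exp a + Real.exp b := by positivity
  have h10 := happrox 1 0
  simp only [Matrix.cons_val', Matrix.cons_val_zero, Matrix.cons_val_one, Matrix.head_cons,
    Matrix.empty_val', Matrix.cons_val_fin_one, Matrix.head_fin_const] at h10
  -- h10 : |0 - exp a / (exp a + exp b)| ≤ ε
  have h0 : (!![1 - γ, γ; 0, 1] : Matrix (Fin 2) (Fin 2) ℝ) 1 0 = 0 := by
    simp [Matrix.cons_val_one, Matrix.head_cons]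
  rw [h0] at h10
  have hfrac : Real.exp a / (Real.exp a + Real.exp b) ≤ ε := by
    have h1 := (abs_le.mp h10).1
    nlinarith [div_nonneg (Real.exp_pos a).le hS.le]
  have hkey : (1 / ε - 1) ≤ Real.exp (b - a) := by
    rw [Real.exp_sub]
    rw [div_le_iff₀ hS] at hfrac
    have h2 : (1 - ε) * Real.exp a ≤ ε * Real.exp b := by nlinarith
    have hεinv : ε * (1 / ε) = 1 := by field_simp
    rw [le_div_iff₀ (Real.exp_pos a)]
    nlinarith [mul_le_mul_of_nonneg_left h2 (le_of_lt (one_div_pos.mpr hε))]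
  have hinv : 0 < 1 / ε - 1 := by
    have : 2 < 1 / ε := by
      rw [lt_div_iff₀ hε]; linarith
    linarith
  have hlog : Real.log (1 / ε - 1) ≤ b - a :=
    (Real.log_le_iff_le_exp hinv).mpr hkey
  have hinner : ⟪e₂, W (e₂ - e₁)⟫ = b - a := by
    rw [map_sub, inner_sub_right]
  refine ⟨by rw [hinner]; exact hlog, ?_⟩
  have hne : e₁ ≠ e₂ := by
    intro h
    rw [h, real_inner_self_eq_norm_sq, he₂] at hρ
    rw [hρ] at hρ1; norm_num at hρ1
  have hpos : 0 < ‖e₁ - e₂‖ := by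
    rwa [norm_sub_pos_iff]
  rw [ge_iff_le, div_le_iff₀ hpos]
  have hC : b - a ≤ ‖W‖ * ‖e₁ - e₂‖ := by
    calc b - a = ⟪e₂, W (e₂ - e₁)⟫ := hinner.symm
    _ ≤ ‖e₂‖ * ‖W (e₂ - e₁)‖ := real_inner_le_norm _ _
    _ = ‖W (e₂ - e₁)‖ := by rw [he₂, one_mul]
    _ ≤ ‖W‖ * ‖e₂ - e₁‖ := W.le_opNorm _
    _ = ‖W‖ * ‖e₁ - e₂‖ := by rw [norm_sub_rev]
  linarith
end

section
/- Let A ∈ ℝ^{N×N} be a matrix of rank at most d, and let P = softmax(A) be its row-wise softmax (a stochastic matrix). If N ≥ 2 and d < N, then P cannot equal an arbitrary stochastic target: in particular, for N = 3, d = 1, there exists a row-stochastic matrix P⋆ with strictly positive entries such that no rank-1 matrix A satisfies softmax(A) = P⋆. Concretely, softmax(A) = P⋆ (with P⋆ entrywise positive) if and only if log P⋆ (entrywise logarithm) equals A + c·1ᵀ for some vector c ∈ ℝ^N (row-wise constant shifts); hence rank(A) ≤ d is achievable iff log P⋆ has rank at most d+1 after allowing rank-one row-shift corrections, i.e., iff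 there exists c ∈ ℝ^N with rank(log P⋆ − c·1ᵀ) ≤ d. -/
/-!
Softmax normalises each row of `exp A`, so adding a constant to a row does not change it, and
conversely `log (softmax A)` recovers `A` up to the row constants `log ∑ₖ exp A i k`. Hence the
preimage of a positive stochastic `P` is the row-shift class of `log P`, and the rank question
becomes one about row shifts of `log P`. A row shift of a rank-one matrix `w vᵀ` has the
differences `M i j - M i k = w i (v j - v k)`, whose `2 × 2` minors vanish; the target `Q` in the
3 × 3 example is chosen to violate this.
-/

/-- Row-wise softmax of a square matrix. -/
noncomputable def softmaxM {N : ℕ} (A : Matrix (Fin N) (Fin N) ℝ) :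
    Matrix (Fin N) (Fin N) ℝ :=
  Matrix.of fun i j => Real.exp (A i j) / ∑ k, Real.exp (A i k)

open Matrix Real

theorem Matrix.exists_eq_vecMulVec_of_rank_le_one {K m n : Type*} [Field K] [Fintype n]
    (M : Matrix m n K) (h : M.rank ≤ 1) : ∃ (w : m → K) (v : n → K), M = vecMulVec w v := by
  classical
  obtain ⟨w, hw⟩ := (Submodule.finrank_le_one_iff_isPrincipal _).mp h
  have hcol : ∀ j, ∃ a : K, a • w = fun i => M i j := fun j => by
    have hmem : M *ᵥ Pi.single j 1 ∈ LinearMap.range M.mulVecLin := ⟨Pi.single j 1, rfl⟩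
    rw [hw, Submodule.mem_span_singleton, mulVec_single_one] at hmem
    exact hmem
  choose v hv using hcol
  refine ⟨w, v, ext fun i j => ?_⟩
  rw [vecMulVec_apply, ← congrFun (hv j) i, Pi.smul_apply, smul_eq_mul, mul_comm]

theorem sub_mul_sub_eq_of_eq_vecMulVec_add {R m n : Type*} [CommRing R] {M : Matrix m n R}
    {w : m → R} {v : n → R} {c : m → R} (hM : ∀ i j, M i j = w i * v j + c i)
    (i i' : m) (j k l : n) :
    (M i j - M i k) * (M i' j - M i' l) = (M i' j - M i' k) * (M i j - M i l) := by
  simp only [hM]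
  ring

section Softmax

variable {N : ℕ}

theorem softmaxM_of_add_rowConst (A : Matrix (Fin N) (Fin N) ℝ) (c : Fin N → ℝ) :
    softmaxM (of fun i j => A i j + c i) = softmaxM A := by
  ext i j
  simp only [softmaxM, of_apply, exp_add, ← Finset.sum_mul]
  exact mul_div_mul_right _ _ (exp_ne_zero _)

theorem softmaxM_of_log {P : Matrix (Fin N) (Fin N) ℝ} (hpos : ∀ i j, 0 < P i j)
    (hstoch : ∀ i, ∑ j, P i j = 1) : softmaxM (of fun i j => log (P i j)) = P := by
  ext i j
  simp only [softmaxM, of_apply, exp_log (hpos _ _), hstoch, div_one]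

theorem eq_log_softmaxM_add_log_sum_exp (A : Matrix (Fin N) (Fin N) ℝ) :
    A = of fun i j => log (softmaxM A i j) + log (∑ k, exp (A i k)) := by
  ext i j
  have hsum : ∑ k, exp (A i k) ≠ 0 :=
    (Finset.sum_pos (fun k _ => exp_pos (A i k)) ⟨j, Finset.mem_univ j⟩).ne'
  rw [of_apply, softmaxM, of_apply, log_div (exp_ne_zero _) hsum, log_exp, sub_add_cancel]

theorem softmaxM_eq_iff {P : Matrix (Fin N) (Fin N) ℝ} (hpos : ∀ i j, 0 < P i j)
    (hstoch : ∀ i, ∑ j, P i j = 1) (A : Matrix (Fin N) (Fin N) ℝ) :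
    softmaxM A = P ↔ ∃ c : Fin N → ℝ, A = of fun i j => log (P i j) + c i := by
  constructor
  · rintro rfl
    exact ⟨_, eq_log_softmaxM_add_log_sum_exp A⟩
  · rintro ⟨c, rfl⟩
    exact (softmaxM_of_add_rowConst (of fun i j => log (P i j)) c).trans
      (softmaxM_of_log hpos hstoch)

theorem exists_rank_le_softmaxM_eq_iff {P : Matrix (Fin N) (Fin N) ℝ} (hpos : ∀ i j, 0 < P i j)
    (hstoch : ∀ i, ∑ j, P i j = 1) (d : ℕ) :
    (∃ A : Matrix (Fin N) (Fin N) ℝ, A.rank ≤ d ∧ softmaxM A = P) ↔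
      ∃ c : Fin N → ℝ, (of fun i j => log (P i j) - c i : Matrix (Fin N) (Fin N) ℝ).rank ≤ d := by
  simp only [softmaxM_eq_iff hpos hstoch, sub_eq_add_neg]
  constructor
  · rintro ⟨A, hA, c, rfl⟩
    exact ⟨-c, by simpa only [Pi.neg_apply, neg_neg] using hA⟩
  · rintro ⟨c, hc⟩
    exact ⟨_, hc, fun i => -c i, rfl⟩

end Softmax

theorem exists_pos_stochastic_ne_softmaxM_of_rank_le_one :
    ∃ Q : Matrix (Fin 3) (Fin 3) ℝ, (∀ i j, 0 < Q i j) ∧ (∀ i, ∑ j, Q i j = 1) ∧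
      ∀ A : Matrix (Fin 3) (Fin 3) ℝ, A.rank ≤ 1 → softmaxM A ≠ Q := by
  set Q : Matrix (Fin 3) (Fin 3) ℝ := !![1/4, 1/4, 1/2; 1/4, 1/2, 1/4; 1/3, 1/3, 1/3]
  have hpos : ∀ i j, 0 < Q i j := by
    intro i j
    fin_cases i <;> fin_cases j <;> norm_num [Q]
  have hstoch : ∀ i, ∑ j, Q i j = 1 := by
    intro i
    fin_cases i <;> norm_num [Q, Fin.sum_univ_three, cons_val_two]
  refine ⟨Q, hpos, hstoch, fun A hA hQ => ?_⟩
  obtain ⟨c, rfl⟩ := (softmaxM_eq_iff hpos hstoch A).mp hQ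
  obtain ⟨w, v, hwv⟩ := exists_eq_vecMulVec_of_rank_le_one _ hA
  have hlogQ : ∀ i j, log (Q i j) = w i * v j + -c i := fun i j => by
    rw [← vecMulVec_apply, ← hwv, of_apply, add_neg_cancel_right]
  have hminor := sub_mul_sub_eq_of_eq_vecMulVec_add hlogQ 0 1 0 1 2
  have hlog : log (1 / 4 : ℝ) - log (1 / 2) ≠ 0 :=
    (sub_neg.mpr (log_lt_log (by norm_num) (by norm_num))).ne
  norm_num [Q, cons_val_two] at hminor
  exact hlog hminor

theorem stmt19 {N d : ℕ} (P : Matrix (Fin N) (Fin N) ℝ)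
    (hpos : ∀ i j, 0 < P i j) (hstoch : ∀ i, ∑ j, P i j = 1) :
    (∀ A : Matrix (Fin N) (Fin N) ℝ,
        softmaxM A = P ↔
          ∃ c : Fin N → ℝ, A = Matrix.of fun i j => Real.log (P i j) + c i)
    ∧ ((∃ A : Matrix (Fin N) (Fin N) ℝ, A.rank ≤ d ∧ softmaxM A = P)
        ↔ ∃ c : Fin N → ℝ,
            (Matrix.of fun i j => Real.log (P i j) - c i : Matrix (Fin N) (Fin N) ℝ).rank ≤ d)
    ∧ (∃ Q : Matrix (Fin 3) (Fin 3) ℝ, (∀ i j, 0 < Q i j) ∧ (∀ i, ∑ j, Q i j = 1) ∧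
        ∀ A : Matrix (Fin 3) (Fin 3) ℝ, A.rank ≤ 1 → softmaxM A ≠ Q) :=
  ⟨softmaxM_eq_iff hpos hstoch, exists_rank_le_softmaxM_eq_iff hpos hstoch d,
    exists_pos_stochastic_ne_softmaxM_of_rank_le_one⟩
end
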